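/- arXiv:math/0211210 — 6 statements merged into one kernel-verified Lean document; each statement's English description precedes it below -/
import Mathlib

section
/- Let A and B be real symmetric 3×3 matrices. Set R = tr(A) and H = tr(B), and let ⟨·,·⟩ and ‖·‖ denote the Frobenius inner product and norm on 3×3 matrices. Then ‖B‖²·‖A‖² − 2·R·H·⟨A,B⟩ + 2·R·tr(A·B²) + (1/2)·R²·(H² − ‖B‖²) ≥ 0. -/
open Matrix in
theorem stmt_0 (A B : Matrix (Fin 3) (Fin 3) ℝ)
    (hA : A.IsSymm) (hB : B.IsSymm) :
    (∑ i, ∑ j, B i j * B i j) * (∑ i, ∑ j, A i j * A i j)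
      - 2 * A.trace * B.trace * (∑ i, ∑ j, A i j * B i j)
      + 2 * A.trace * (A * B * B).trace
      + (1 / 2) * A.trace ^ 2 * (B.trace ^ 2 - ∑ i, ∑ j, B i j * B i j) ≥ 0 := by
  have a1 : A 1 0 = A 0 1 := hA.apply 0 1
  have a2 : A 2 0 = A 0 2 := hA.apply 0 2
  have a3 : A 2 1 = A 1 2 := hA.apply 1 2
  have b1 : B 1 0 = B 0 1 := hB.apply 0 1
  have b2 : B 2 0 = B 0 2 := hB.apply 0 2
  have b3 : B 2 1 = B 1 2 := hB.apply 1 2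
  simp only [Matrix.trace_fin_three, Fin.sum_univ_three, Matrix.mul_apply,
    a1, a2, a3, b1, b2, b3]
  linarith [
    sq_nonneg (2 * A 0 0 * B 0 0 - A 0 0 * B 1 1 - A 0 0 * B 2 2 + 2 * A 0 1 * B 0 1 + 2 * A 0 2 * B 0 2 - A 1 1 * B 1 1 + A 1 1 * B 2 2 - 4 * A 1 2 * B 1 2 + A 2 2 * B 1 1 - A 2 2 * B 2 2),
    sq_nonneg (3 * A 0 0 * B 0 1 - A 0 1 * B 0 0 + A 0 1 * B 1 1 - 2 * A 0 1 * B 2 2 + 3 * A 0 2 * B 1 2 + A 1 1 * B 0 1 + A 1 2 * B 0 2),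
    sq_nonneg (3 * A 0 0 * B 0 2 + 3 * A 0 1 * B 1 2 - A 0 2 * B 0 0 - 2 * A 0 2 * B 1 1 + A 0 2 * B 2 2 + A 1 2 * B 0 1 + A 2 2 * B 0 2),
    sq_nonneg (3 * A 0 0 * B 1 1 + A 0 0 * B 2 2 - 2 * A 0 1 * B 0 1 + 2 * A 0 2 * B 0 2 - 2 * A 1 1 * B 0 0 - A 1 1 * B 1 1 - A 1 1 * B 2 2 - 2 * A 2 2 * B 0 0 + A 2 2 * B 1 1 + A 2 2 * B 2 2),
    sq_nonneg (A 0 0 * B 1 2 - A 0 1 * B 0 2 - A 0 2 * B 0 1 - A 1 2 * B 1 1 - A 1 2 * B 2 2),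
    sq_nonneg (2 * A 0 0 * B 2 2 + 2 * A 0 1 * B 0 1 - 2 * A 0 2 * B 0 2 - A 1 1 * B 0 0 + A 1 1 * B 1 1 + A 1 1 * B 2 2 - A 2 2 * B 0 0 - A 2 2 * B 1 1 - A 2 2 * B 2 2),
    sq_nonneg (5 * A 0 1 * B 0 0 + A 0 1 * B 1 1 - 2 * A 0 1 * B 2 2 + 3 * A 0 2 * B 1 2 + 4 * A 1 1 * B 0 1 + 7 * A 1 2 * B 0 2 - 3 * A 2 2 * B 0 1),
    sq_nonneg (2 * A 0 1 * B 0 1 - 2 * A 0 2 * B 0 2 - A 1 1 * B 0 0 + A 1 1 * B 1 1 - A 1 1 * B 2 2 + A 2 2 * B 0 0 + A 2 2 * B 1 1 - A 2 2 * B 2 2),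
    sq_nonneg (3 * A 0 1 * B 0 2 + A 0 2 * B 0 1 + 3 * A 1 1 * B 1 2 - 2 * A 1 2 * B 0 0 - A 1 2 * B 1 1 + A 1 2 * B 2 2 + A 2 2 * B 1 2),
    sq_nonneg (2 * A 0 1 * B 1 1 + A 0 1 * B 2 2 + A 0 2 * B 1 2 - 2 * A 1 1 * B 0 1 - A 1 2 * B 0 2 - A 2 2 * B 0 1),
    sq_nonneg (A 0 1 * B 1 2 + A 0 2 * B 0 0 + A 0 2 * B 2 2 - A 1 1 * B 0 2 + A 1 2 * B 0 1),
    sq_nonneg (A 0 2 * B 0 0 - A 0 2 * B 1 1 - A 0 2 * B 2 2 + 2 * A 1 2 * B 0 1 + 2 * A 2 2 * B 0 2),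
    sq_nonneg (2 * A 0 2 * B 0 1 - A 1 2 * B 0 0 + A 1 2 * B 1 1 - A 1 2 * B 2 2 + 2 * A 2 2 * B 1 2)]
end

section
/- Let g be a positive-definite real symmetric 3×3 matrix, and let A and B be real symmetric 3×3 matrices. Define the g-inner product of symmetric matrices by ⟨A,B⟩_g = tr(g⁻¹·A·g⁻¹·B), the g-norm by ‖A‖_g² = ⟨A,A⟩_g, the g-traces R = tr(g⁻¹·A) and H = tr(g⁻¹·B), and the contraction ⟨A,B²⟩_g = tr(g⁻¹·A·g⁻¹·B·g⁻¹·B). Then ‖B‖_g²·‖A‖_g² − 2·R·H·⟨A,B⟩_g + 2·R·⟨A,B²⟩_g + (1/2)·R²·(H² − ‖B‖_g²) ≥ 0. -/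
/-!
Writing `g⁻¹ = Qᵀ Q`, every `g`-contraction of `A` and `B` becomes the Euclidean contraction of
`Q A Qᵀ` and `Q B Qᵀ`, so it suffices to treat `g = 1`; by the same identity with `Q` orthogonal
we may then assume `B` diagonal. For diagonal `B` the off-diagonal entries of `A` only contribute
`2 |B|² ∑_{i<j} A_ij² ≥ 0`, and what remains is a quartic form in the diagonal entries of `A` and
`B`, which is a sum of squares.
-/

open Matrix

variable {m n : Type*} [Fintype n]

-- `G` plays the role of the inverse metric `g⁻¹`.
noncomputable def quartic (G A B : Matrix n n ℝ) : ℝ :=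
  (G * B * G * B).trace * (G * A * G * A).trace
    - 2 * (G * A).trace * (G * B).trace * (G * A * G * B).trace
    + 2 * (G * A).trace * (G * A * G * B * G * B).trace
    + (1 / 2) * (G * A).trace ^ 2 * ((G * B).trace ^ 2 - (G * B * G * B).trace)

theorem quartic_conjTranspose_mul_self [Fintype m] [DecidableEq m] (Q : Matrix m n ℝ)
    (A B : Matrix n n ℝ) :
    quartic (Qᴴ * Q) A B = quartic 1 (Q * A * Qᴴ) (Q * B * Qᴴ) := by
  simp only [quartic, Matrix.one_mul, Matrix.mul_one, Matrix.mul_assoc, trace_mul_comm Qᴴ]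

theorem Matrix.IsSymm.mul_mul_conjTranspose {A : Matrix n n ℝ} (hA : A.IsSymm) (Q : Matrix m n ℝ) :
    (Q * A * Qᴴ).IsSymm :=
  isHermitian_iff_isSymm.mp (isHermitian_mul_mul_conjTranspose Q (isHermitian_iff_isSymm.mpr hA))

theorem quartic_diagonal_nonneg (a b : Fin 3 → ℝ) : 0 ≤ quartic 1 (diagonal a) (diagonal b) := by
  simp only [quartic, Matrix.one_mul, Matrix.mul_one, diagonal_mul_diagonal, trace_diagonal,
    Fin.sum_univ_three]
  nlinarith [sq_nonneg (2*a 0*b 0 - a 0*b 1 - a 0*b 2 - a 1*b 1 + a 1*b 2 + a 2*b 1 - a 2*b 2),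
    sq_nonneg (3*a 0*b 1 + a 0*b 2 - 2*a 1*b 0 - a 1*b 1 - a 1*b 2 - 2*a 2*b 0 + a 2*b 1 + a 2*b 2),
    sq_nonneg (2*a 0*b 2 - a 1*b 0 + a 1*b 1 + a 1*b 2 - a 2*b 0 - a 2*b 1 - a 2*b 2),
    sq_nonneg (a 1*b 0 - a 1*b 1 + a 1*b 2 - a 2*b 0 - a 2*b 1 + a 2*b 2)]

theorem quartic_one_diagonal_right {A : Matrix (Fin 3) (Fin 3) ℝ} (hA : A.IsSymm) (b : Fin 3 → ℝ) :
    quartic 1 A (diagonal b) = quartic 1 (diagonal A.diag) (diagonal b)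
      + 2 * (b 0 ^ 2 + b 1 ^ 2 + b 2 ^ 2) * (A 0 1 ^ 2 + A 0 2 ^ 2 + A 1 2 ^ 2) := by
  simp only [quartic, Matrix.one_mul, Matrix.mul_one, trace_fin_three, mul_apply,
    Fin.sum_univ_three, diagonal_apply, diag_apply, hA.apply 0 1, hA.apply 0 2, hA.apply 1 2]
  simp only [↓reduceIte, Fin.isValue, zero_ne_one, one_ne_zero, Fin.reduceEq, mul_zero, add_zero,
    zero_add, zero_mul]
  ring

theorem quartic_one_nonneg {A B : Matrix (Fin 3) (Fin 3) ℝ} (hA : A.IsSymm) (hB : B.IsSymm) :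
    0 ≤ quartic 1 A B := by
  have hB' : B.IsHermitian := isHermitian_iff_isSymm.mpr hB
  set Q : Matrix (Fin 3) (Fin 3) ℝ := star (hB'.eigenvectorUnitary : Matrix (Fin 3) (Fin 3) ℝ)
  have hQ : Qᴴ * Q = 1 := by
    rw [← star_eq_conjTranspose, star_star]
    exact Unitary.coe_mul_star_self _
  have hQB : Q * B * Qᴴ = diagonal (RCLike.ofReal ∘ hB'.eigenvalues) :=
    hB'.conjStarAlgAut_star_eigenvectorUnitary
  have hQA : (Q * A * Qᴴ).IsSymm := hA.mul_mul_conjTranspose Q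
  have hconj : quartic 1 A B = quartic 1 (Q * A * Qᴴ) (Q * B * Qᴴ) := by
    rw [← quartic_conjTranspose_mul_self, hQ]
  rw [hconj, hQB, quartic_one_diagonal_right hQA]
  have := quartic_diagonal_nonneg (Q * A * Qᴴ).diag (RCLike.ofReal ∘ hB'.eigenvalues)
  positivity

open Matrix in
theorem stmt_1_general (g A B : Matrix (Fin 3) (Fin 3) ℝ)
    (hg : g.PosDef) (hA : A.IsSymm) (hB : B.IsSymm) :
    (g⁻¹ * B * g⁻¹ * B).trace * (g⁻¹ * A * g⁻¹ * A).trace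
      - 2 * (g⁻¹ * A).trace * (g⁻¹ * B).trace * (g⁻¹ * A * g⁻¹ * B).trace
      + 2 * (g⁻¹ * A).trace * (g⁻¹ * A * g⁻¹ * B * g⁻¹ * B).trace
      + (1 / 2) * (g⁻¹ * A).trace ^ 2
          * ((g⁻¹ * B).trace ^ 2 - (g⁻¹ * B * g⁻¹ * B).trace) ≥ 0 := by
  obtain ⟨Q, hQ⟩ : ∃ Q : Matrix (Fin 3) (Fin 3) ℝ, g⁻¹ = Qᴴ * Q := by
    open scoped MatrixOrder Matrix.Norms.L2Operator in
    exact CStarAlgebra.nonneg_iff_eq_star_mul_self.mp hg.inv.posSemidef.nonneg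
  change 0 ≤ quartic g⁻¹ A B
  rw [hQ, quartic_conjTranspose_mul_self]
  exact quartic_one_nonneg (hA.mul_mul_conjTranspose Q) (hB.mul_mul_conjTranspose Q)

open Matrix in
theorem stmt_1 (g A B : Matrix (Fin 3) (Fin 3) ℝ)
    (hg : g.PosDef) (hgs : g.IsSymm) (hA : A.IsSymm) (hB : B.IsSymm) :
    (g⁻¹ * B * g⁻¹ * B).trace * (g⁻¹ * A * g⁻¹ * A).trace
      - 2 * (g⁻¹ * A).trace * (g⁻¹ * B).trace * (g⁻¹ * A * g⁻¹ * B).trace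
      + 2 * (g⁻¹ * A).trace * (g⁻¹ * A * g⁻¹ * B * g⁻¹ * B).trace
      + (1 / 2) * (g⁻¹ * A).trace ^ 2
          * ((g⁻¹ * B).trace ^ 2 - (g⁻¹ * B * g⁻¹ * B).trace) ≥ 0 :=
  stmt_1_general g A B hg hA hB
end

section
/- For all real numbers r₁, r₂, r₃, h₁, h₂, h₃, the polynomial Q := (h₁²+h₂²+h₃²)(r₁²+r₂²+r₃²) − 2(r₁+r₂+r₃)(h₁+h₂+h₃)(r₁h₁+r₂h₂+r₃h₃) + 2(r₁+r₂+r₃)(r₁h₁²+r₂h₂²+r₃h₃²) + (r₁+r₂+r₃)²(h₁h₂+h₁h₃+h₂h₃) is nonnegative: Q ≥ 0. -/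
private lemma cauchy3 (u₁ u₂ u₃ p₁ p₂ p₃ : ℝ) :
    (u₁*p₁+u₂*p₂+u₃*p₃)^2 ≤ (u₁^2+u₂^2+u₃^2)*(p₁^2+p₂^2+p₃^2) := by
  nlinarith [sq_nonneg (u₁*p₂-u₂*p₁), sq_nonneg (u₁*p₃-u₃*p₁), sq_nonneg (u₂*p₃-u₃*p₂)]

private lemma amgm623 (A B C : ℝ) (hA : 0 ≤ A) (hC : 0 ≤ C) (hB : B^2 ≤ 6*A*C) :
    0 ≤ 2*A + 2*B + 3*C := by
  nlinarith [sq_nonneg (2*A-3*C), sq_nonneg (2*A+2*B+3*C)]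

theorem stmt_2 (r₁ r₂ r₃ h₁ h₂ h₃ : ℝ) :
    (h₁ ^ 2 + h₂ ^ 2 + h₃ ^ 2) * (r₁ ^ 2 + r₂ ^ 2 + r₃ ^ 2)
      - 2 * (r₁ + r₂ + r₃) * (h₁ + h₂ + h₃) * (r₁ * h₁ + r₂ * h₂ + r₃ * h₃)
      + 2 * (r₁ + r₂ + r₃) * (r₁ * h₁ ^ 2 + r₂ * h₂ ^ 2 + r₃ * h₃ ^ 2)
      + (r₁ + r₂ + r₃) ^ 2 * (h₁ * h₂ + h₁ * h₃ + h₂ * h₃) ≥ 0 := by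
  set s := r₁ + r₂ + r₃ with hs
  set t := h₁ + h₂ + h₃ with ht
  set n := h₁^2 + h₂^2 + h₃^2 with hn
  set u₁ := 2*(2*h₂*h₃ - h₁*h₂ - h₁*h₃) with hu1
  set u₂ := 2*(2*h₁*h₃ - h₂*h₁ - h₂*h₃) with hu2
  set u₃ := 2*(2*h₁*h₂ - h₃*h₁ - h₃*h₂) with hu3
  set p₁ := 3*r₁ - s with hp1
  set p₂ := 3*r₂ - s with hp2
  set p₃ := 3*r₃ - s with hp3
  have hP : (0:ℝ) ≤ p₁^2 + p₂^2 + p₃^2 := by positivity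
  have hT : (0:ℝ) ≤ 3*n - t^2 := by
    simp only [hn, ht]
    nlinarith [sq_nonneg (h₁-h₂), sq_nonneg (h₁-h₃), sq_nonneg (h₂-h₃)]
  have hN : (0:ℝ) ≤ n := by positivity
  have hA : (0:ℝ) ≤ n * (p₁^2 + p₂^2 + p₃^2) := mul_nonneg hN hP
  have hC : (0:ℝ) ≤ s^2 * (3*n - t^2) := mul_nonneg (sq_nonneg s) hT
  have hkey : u₁^2 + u₂^2 + u₃^2 ≤ 6 * (n * (3*n - t^2)) := by
    simp only [hu1, hu2, hu3, hn, ht]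
    nlinarith [sq_nonneg ((h₁-h₂)*(h₁+h₂-h₃)), sq_nonneg ((h₂-h₃)*(h₂+h₃-h₁)),
      sq_nonneg ((h₁-h₃)*(h₁+h₃-h₂))]
  have hcs := cauchy3 u₁ u₂ u₃ p₁ p₂ p₃
  have hB : (s*(u₁*p₁+u₂*p₂+u₃*p₃))^2 ≤
      6 * (n * (p₁^2 + p₂^2 + p₃^2)) * (s^2 * (3*n - t^2)) := by
    have h1 : (s*(u₁*p₁+u₂*p₂+u₃*p₃))^2 = s^2 * (u₁*p₁+u₂*p₂+u₃*p₃)^2 := by ring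
    have h2 : (u₁^2+u₂^2+u₃^2)*(p₁^2+p₂^2+p₃^2)
        ≤ (6 * (n * (3*n - t^2)))*(p₁^2+p₂^2+p₃^2) :=
      mul_le_mul_of_nonneg_right hkey hP
    have h3 : s^2 * ((u₁*p₁+u₂*p₂+u₃*p₃)^2)
        ≤ s^2 * ((6 * (n * (3*n - t^2)))*(p₁^2+p₂^2+p₃^2)) :=
      mul_le_mul_of_nonneg_left (le_trans hcs h2) (sq_nonneg s)
    calc (s*(u₁*p₁+u₂*p₂+u₃*p₃))^2
        = s^2 * ((u₁*p₁+u₂*p₂+u₃*p₃)^2) := by ring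
      _ ≤ s^2 * ((6 * (n * (3*n - t^2)))*(p₁^2+p₂^2+p₃^2)) := h3
      _ = 6 * (n * (p₁^2 + p₂^2 + p₃^2)) * (s^2 * (3*n - t^2)) := by ring
  have hfin := amgm623 _ _ _ hA hC hB
  have hid : 2*(n * (p₁^2 + p₂^2 + p₃^2)) + 2*(s*(u₁*p₁+u₂*p₂+u₃*p₃)) + 3*(s^2 * (3*n - t^2))
      = 18 * (n * (r₁ ^ 2 + r₂ ^ 2 + r₃ ^ 2)
      - 2 * s * t * (r₁ * h₁ + r₂ * h₂ + r₃ * h₃)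
      + 2 * s * (r₁ * h₁ ^ 2 + r₂ * h₂ ^ 2 + r₃ * h₃ ^ 2)
      + s ^ 2 * (h₁ * h₂ + h₁ * h₃ + h₂ * h₃)) := by
    simp only [hu1, hu2, hu3, hp1, hp2, hp3, hn, ht, hs]
    ring
  linarith [hfin, hid.ge, hid.le]
end

section
/- For all real numbers r₁, r₂, r₃, the symmetric 3×3 matrix H(r) with diagonal entries H₁₁ = H₂₂ = H₃₃ = 2r₁²+2r₂²+2r₃² and off-diagonal entries H₁₂ = r₃²−r₁²−r₂²−2r₁r₂, H₁₃ = r₂²−r₁²−r₃²−2r₁r₃, H₂₃ = r₁²−r₂²−r₃²−2r₂r₃ is positive semidefinite. -/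
/-!
The quadratic form of `H(r)` is a weighted sum of four squares of linear forms whose coefficients
are linear in `r`; in matrix terms `H(r) = Rᵀ · diag(1/2, 1/6, 1/3, 1) · R` for an explicit
`4 × 3` matrix `R`, a congruence of a nonnegative diagonal matrix.
-/

open Matrix

namespace Hessian

def hessian (r₁ r₂ r₃ : ℝ) : Matrix (Fin 3) (Fin 3) ℝ :=
  !![2 * r₁ ^ 2 + 2 * r₂ ^ 2 + 2 * r₃ ^ 2,
    r₃ ^ 2 - r₁ ^ 2 - r₂ ^ 2 - 2 * r₁ * r₂,
    r₂ ^ 2 - r₁ ^ 2 - r₃ ^ 2 - 2 * r₁ * r₃;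
    r₃ ^ 2 - r₁ ^ 2 - r₂ ^ 2 - 2 * r₁ * r₂,
    2 * r₁ ^ 2 + 2 * r₂ ^ 2 + 2 * r₃ ^ 2,
    r₁ ^ 2 - r₂ ^ 2 - r₃ ^ 2 - 2 * r₂ * r₃;
    r₂ ^ 2 - r₁ ^ 2 - r₃ ^ 2 - 2 * r₁ * r₃,
    r₁ ^ 2 - r₂ ^ 2 - r₃ ^ 2 - 2 * r₂ * r₃,
    2 * r₁ ^ 2 + 2 * r₂ ^ 2 + 2 * r₃ ^ 2]

def gramFactor (r₁ r₂ r₃ : ℝ) : Matrix (Fin 4) (Fin 3) ℝ :=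
  !![2 * r₁, -(r₁ + r₂ - r₃), -(r₁ - r₂ + r₃);
    -2 * (r₂ + r₃), 3 * r₁ - r₂ + r₃, r₁ - r₂ + r₃;
    -(r₂ + r₃), r₂ - r₃, 2 * r₁ + r₂ - r₃;
    r₂ - r₃, -(r₂ + r₃), r₂ + r₃]

noncomputable def gramWeights : Fin 4 → ℝ := ![1 / 2, 1 / 6, 1 / 3, 1]

theorem gramWeights_nonneg : 0 ≤ gramWeights := by
  intro i
  fin_cases i <;> norm_num [gramWeights]

theorem hessian_eq_gram (r₁ r₂ r₃ : ℝ) :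
    hessian r₁ r₂ r₃ =
      (gramFactor r₁ r₂ r₃)ᴴ * diagonal gramWeights * gramFactor r₁ r₂ r₃ := by
  ext i j
  fin_cases i <;> fin_cases j <;>
    simp [hessian, gramFactor, gramWeights, mul_apply, Fin.sum_univ_four] <;> ring

theorem posSemidef_hessian (r₁ r₂ r₃ : ℝ) : (hessian r₁ r₂ r₃).PosSemidef := by
  rw [hessian_eq_gram]
  exact (PosSemidef.diagonal gramWeights_nonneg).conjTranspose_mul_mul_same _

end Hessian

theorem stmt_4 (r₁ r₂ r₃ : ℝ) :
    (!![2 * r₁ ^ 2 + 2 * r₂ ^ 2 + 2 * r₃ ^ 2,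
        r₃ ^ 2 - r₁ ^ 2 - r₂ ^ 2 - 2 * r₁ * r₂,
        r₂ ^ 2 - r₁ ^ 2 - r₃ ^ 2 - 2 * r₁ * r₃;
        r₃ ^ 2 - r₁ ^ 2 - r₂ ^ 2 - 2 * r₁ * r₂,
        2 * r₁ ^ 2 + 2 * r₂ ^ 2 + 2 * r₃ ^ 2,
        r₁ ^ 2 - r₂ ^ 2 - r₃ ^ 2 - 2 * r₂ * r₃;
        r₂ ^ 2 - r₁ ^ 2 - r₃ ^ 2 - 2 * r₁ * r₃,
        r₁ ^ 2 - r₂ ^ 2 - r₃ ^ 2 - 2 * r₂ * r₃,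
        2 * r₁ ^ 2 + 2 * r₂ ^ 2 + 2 * r₃ ^ 2] : Matrix (Fin 3) (Fin 3) ℝ).PosSemidef :=
  Hessian.posSemidef_hessian r₁ r₂ r₃
end

section
/- For all real numbers r₁, r₂, r₃, let Δ₃ denote the determinant of the symmetric 3×3 matrix H(r) with diagonal entries H₁₁ = H₂₂ = H₃₃ = 2r₁²+2r₂²+2r₃² and off-diagonal entries H₁₂ = r₃²−r₁²−r₂²−2r₁r₂, H₁₃ = r₂²−r₁²−r₃²−2r₁r₃, H₂₃ = r₁²−r₂²−r₃²−2r₂r₃. Then 3·Δ₃ = 2X⁶ − 6X⁴Y − 24X²Y² + 24Y³ + 16X³Z, where X = r₁+r₂+r₃, Y = r₁²+r₂²+r₃², Z = r₁³+r₂³+r₃³. -/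
theorem stmt_6 (r₁ r₂ r₃ : ℝ) :
    3 * (!![2 * r₁ ^ 2 + 2 * r₂ ^ 2 + 2 * r₃ ^ 2,
        r₃ ^ 2 - r₁ ^ 2 - r₂ ^ 2 - 2 * r₁ * r₂,
        r₂ ^ 2 - r₁ ^ 2 - r₃ ^ 2 - 2 * r₁ * r₃;
        r₃ ^ 2 - r₁ ^ 2 - r₂ ^ 2 - 2 * r₁ * r₂,
        2 * r₁ ^ 2 + 2 * r₂ ^ 2 + 2 * r₃ ^ 2,
        r₁ ^ 2 - r₂ ^ 2 - r₃ ^ 2 - 2 * r₂ * r₃;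
        r₂ ^ 2 - r₁ ^ 2 - r₃ ^ 2 - 2 * r₁ * r₃,
        r₁ ^ 2 - r₂ ^ 2 - r₃ ^ 2 - 2 * r₂ * r₃,
        2 * r₁ ^ 2 + 2 * r₂ ^ 2 + 2 * r₃ ^ 2] : Matrix (Fin 3) (Fin 3) ℝ).det
    = 2 * (r₁ + r₂ + r₃) ^ 6
      - 6 * (r₁ + r₂ + r₃) ^ 4 * (r₁ ^ 2 + r₂ ^ 2 + r₃ ^ 2)
      - 24 * (r₁ + r₂ + r₃) ^ 2 * (r₁ ^ 2 + r₂ ^ 2 + r₃ ^ 2) ^ 2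
      + 24 * (r₁ ^ 2 + r₂ ^ 2 + r₃ ^ 2) ^ 3
      + 16 * (r₁ + r₂ + r₃) ^ 3 * (r₁ ^ 3 + r₂ ^ 3 + r₃ ^ 3) := by
  rw [Matrix.det_fin_three]; simp [Matrix.cons_val_zero, Matrix.cons_val_one]; ring
end

section
/- For all real numbers r₁, r₂, r₃, the determinant Δ₃ of the symmetric 3×3 matrix H(r) with diagonal entries H₁₁ = H₂₂ = H₃₃ = 2r₁²+2r₂²+2r₃² and off-diagonal entries H₁₂ = r₃²−r₁²−r₂²−2r₁r₂, H₁₃ = r₂²−r₁²−r₃²−2r₁r₃, H₂₃ = r₁²−r₂²−r₃²−2r₂r₃ is nonnegative: Δ₃ ≥ 0. -/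
/-!
H(r) is a Gram matrix: H(r) = B(r)ᵀ B(r) for the 4 × 3 matrix B(r) below, whose entries are
linear in r. Hence H(r) is positive semidefinite and its determinant is nonnegative
(by Cauchy–Binet, Δ₃ is the sum of the squares of the four 3 × 3 minors of B(r)).
-/

open Matrix

theorem Matrix.det_transpose_mul_self_nonneg {m n : Type*} [Fintype m] [Fintype n]
    [DecidableEq n] (A : Matrix m n ℝ) : 0 ≤ (Aᵀ * A).det := by
  simpa only [conjTranspose_eq_transpose_of_trivial] using
    (posSemidef_conjTranspose_mul_self A).det_nonneg

def hessianGramFactor (r₁ r₂ r₃ : ℝ) : Matrix (Fin 4) (Fin 3) ℝ :=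
  !![r₁ + r₂, -(r₁ + r₂), r₂ - r₁;
     r₁ - r₂, r₃, -r₃;
     r₃, r₂ - r₁, -r₃;
     r₃, r₃, -(r₁ + r₂)]

theorem hessianGramFactor_transpose_mul_self (r₁ r₂ r₃ : ℝ) :
    (hessianGramFactor r₁ r₂ r₃)ᵀ * hessianGramFactor r₁ r₂ r₃ =
      !![2 * r₁ ^ 2 + 2 * r₂ ^ 2 + 2 * r₃ ^ 2,
        r₃ ^ 2 - r₁ ^ 2 - r₂ ^ 2 - 2 * r₁ * r₂,
        r₂ ^ 2 - r₁ ^ 2 - r₃ ^ 2 - 2 * r₁ * r₃;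
        r₃ ^ 2 - r₁ ^ 2 - r₂ ^ 2 - 2 * r₁ * r₂,
        2 * r₁ ^ 2 + 2 * r₂ ^ 2 + 2 * r₃ ^ 2,
        r₁ ^ 2 - r₂ ^ 2 - r₃ ^ 2 - 2 * r₂ * r₃;
        r₂ ^ 2 - r₁ ^ 2 - r₃ ^ 2 - 2 * r₁ * r₃,
        r₁ ^ 2 - r₂ ^ 2 - r₃ ^ 2 - 2 * r₂ * r₃,
        2 * r₁ ^ 2 + 2 * r₂ ^ 2 + 2 * r₃ ^ 2] := by
  ext i j
  fin_cases i <;> fin_cases j <;>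
    simp [hessianGramFactor, mul_apply, Fin.sum_univ_four] <;> ring

theorem stmt_7 (r₁ r₂ r₃ : ℝ) :
    (!![2 * r₁ ^ 2 + 2 * r₂ ^ 2 + 2 * r₃ ^ 2,
        r₃ ^ 2 - r₁ ^ 2 - r₂ ^ 2 - 2 * r₁ * r₂,
        r₂ ^ 2 - r₁ ^ 2 - r₃ ^ 2 - 2 * r₁ * r₃;
        r₃ ^ 2 - r₁ ^ 2 - r₂ ^ 2 - 2 * r₁ * r₂,
        2 * r₁ ^ 2 + 2 * r₂ ^ 2 + 2 * r₃ ^ 2,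
        r₁ ^ 2 - r₂ ^ 2 - r₃ ^ 2 - 2 * r₂ * r₃;
        r₂ ^ 2 - r₁ ^ 2 - r₃ ^ 2 - 2 * r₁ * r₃,
        r₁ ^ 2 - r₂ ^ 2 - r₃ ^ 2 - 2 * r₂ * r₃,
        2 * r₁ ^ 2 + 2 * r₂ ^ 2 + 2 * r₃ ^ 2] : Matrix (Fin 3) (Fin 3) ℝ).det ≥ 0 := by
  rw [← hessianGramFactor_transpose_mul_self]
  exact det_transpose_mul_self_nonneg _
end
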